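/- Suppose T(A_v x) = -A_v(Tx) for all x ∈ W and v ∈ W⊥ (which holds when ∇N = 0 for a submanifold of a Kähler manifold). Then for every i ∈ {0,…,k}, every x ∈ Dᵢ and every v ∈ W⊥, T(T(A_v x)) = -cos²θᵢ · A_v x; in particular, every nonzero A_v x with x ∈ Dᵢ is an eigenvector of T² with eigenvalue -cos²θᵢ (Theorem 3.6 (iii), fiberwise form). -/

import Mathlib

open scoped RealInnerProductSpace

/-! The hypothesis `T ∘ A_v = -A_v ∘ T` gives `T² ∘ A_v = A_v ∘ T²`, so it suffices that
`T² = -cos²θᵢ` on each `Dᵢ`. On `D₀` this holds because `T = J` there. On a slant `Dᵢ`,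
polarizing `‖Tx‖ = cos θᵢ ‖x‖` gives `⟪Tx, Ty⟫ = cos²θᵢ ⟪x, y⟫`, and since `T` is skew on `W`
the vector `T²x + cos²θᵢ x ∈ Dᵢ` is orthogonal to all of `Dᵢ`, hence zero. -/

section

variable {V : Type*} [NormedAddCommGroup V] [InnerProductSpace ℝ V]

theorem LinearMap.inner_map_map_eq_sq_mul_of_norm_map_eq (f : V →ₗ[ℝ] V) {D : Submodule ℝ V}
    {c : ℝ} (hf : ∀ x ∈ D, ‖f x‖ = c * ‖x‖) {a b : V} (ha : a ∈ D) (hb : b ∈ D) :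
    ⟪f a, f b⟫ = c ^ 2 * ⟪a, b⟫ := by
  have hab := norm_add_sq_real (f a) (f b)
  rw [← map_add, hf _ (D.add_mem ha hb), hf a ha, hf b hb, mul_pow, mul_pow, mul_pow,
    norm_add_sq_real] at hab
  linarith

theorem LinearMap.apply_apply_eq_neg_sq_smul_of_skew (S : V →ₗ[ℝ] V) {D : Submodule ℝ V}
    (hSD : ∀ x ∈ D, S x ∈ D) (hskew : ∀ a ∈ D, ∀ b ∈ D, ⟪S a, b⟫ = -⟪a, S b⟫)
    {c : ℝ} (hnorm : ∀ x ∈ D, ‖S x‖ = c * ‖x‖) {x : V} (hx : x ∈ D) :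
    S (S x) = -(c ^ 2 • x) := by
  have hperp : ∀ y ∈ D, ⟪S (S x) + c ^ 2 • x, y⟫ = 0 := fun y hy => by
    rw [inner_add_left, hskew _ (hSD x hx) y hy,
      S.inner_map_map_eq_sq_mul_of_norm_map_eq hnorm hx hy, real_inner_smul_left]
    ring
  rw [eq_neg_iff_add_eq_zero, ← inner_self_eq_zero (𝕜 := ℝ)]
  exact hperp _ (D.add_mem (hSD _ (hSD x hx)) (D.smul_mem _ hx))

variable {J : V →ₗ[ℝ] V} {W : Submodule ℝ V} {T N : V →ₗ[ℝ] V}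

theorem inner_map_left_eq_neg_inner_map_right (hJinner : ∀ x y : V, ⟪J x, J y⟫ = ⟪x, y⟫)
    (hJsq : ∀ x : V, J (J x) = -x) (a b : V) : ⟪J a, b⟫ = -⟪a, J b⟫ := by
  rw [← hJinner a (J b), hJsq, inner_neg_right, neg_neg]

theorem inner_tangential_left_eq_neg (hJinner : ∀ x y : V, ⟪J x, J y⟫ = ⟪x, y⟫)
    (hJsq : ∀ x : V, J (J x) = -x) (hN : ∀ x ∈ W, N x ∈ Wᗮ)
    (hTN : ∀ x ∈ W, J x = T x + N x) {a b : V} (ha : a ∈ W) (hb : b ∈ W) :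
    ⟪T a, b⟫ = -⟪a, T b⟫ := by
  have hJa : ⟪J a, b⟫ = ⟪T a, b⟫ := by
    rw [hTN a ha, inner_add_left, W.inner_left_of_mem_orthogonal hb (hN a ha), add_zero]
  have hJb : ⟪a, J b⟫ = ⟪a, T b⟫ := by
    rw [hTN b hb, inner_add_right, W.inner_right_of_mem_orthogonal ha (hN b hb), add_zero]
  rw [← hJa, ← hJb, inner_map_left_eq_neg_inner_map_right hJinner hJsq]

theorem tangential_eq_of_map_mem (hT : ∀ x ∈ W, T x ∈ W) (hN : ∀ x ∈ W, N x ∈ Wᗮ)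
    (hTN : ∀ x ∈ W, J x = T x + N x) {x : V} (hx : x ∈ W) (hJx : J x ∈ W) : T x = J x := by
  have hNW : N x ∈ W := by
    rw [eq_sub_of_add_eq' (hTN x hx).symm]
    exact W.sub_mem hJx (hT x hx)
  have hN0 : N x = 0 := by
    simpa [W.inf_orthogonal_eq_bot] using Submodule.mem_inf.mpr ⟨hNW, hN x hx⟩
  rw [hTN x hx, hN0, add_zero]

end

theorem T_sq_eigen_of_T_anticommutes_shape_general
    {V : Type*} [NormedAddCommGroup V] [InnerProductSpace ℝ V]
    (J : V →ₗ[ℝ] V)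
    (hJinner : ∀ x y : V, ⟪J x, J y⟫ = ⟪x, y⟫)
    (hJsq : ∀ x : V, J (J x) = -x)
    (W : Submodule ℝ V)
    (T N : V →ₗ[ℝ] V)
    (hT : ∀ x ∈ W, T x ∈ W)
    (hN : ∀ x ∈ W, N x ∈ Wᗮ)
    (hTN : ∀ x ∈ W, J x = T x + N x)
    (k : ℕ)
    (D : Fin (k+1) → Submodule ℝ V)
    (hDW : ∀ i, D i ≤ W)
    (hinv : ∀ x ∈ D 0, J x ∈ D 0)
    (hTD : ∀ i : Fin (k+1), i ≠ 0 → ∀ x ∈ D i, T x ∈ D i)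
    (θ : Fin (k+1) → ℝ)
    (hθ0 : θ 0 = 0)
    (hslant : ∀ i : Fin (k+1), i ≠ 0 → ∀ x ∈ D i, ‖T x‖ = Real.cos (θ i) * ‖x‖)
    (A : V → V →ₗ[ℝ] V)
    (hyp : ∀ v ∈ Wᗮ, ∀ x ∈ W, T (A v x) = -(A v (T x))) :
    ∀ i : Fin (k+1), ∀ x ∈ D i, ∀ v ∈ Wᗮ,
      T (T (A v x)) = -((Real.cos (θ i)) ^ 2 • A v x) := by
  intro i x hx v hv
  have hslant_all : (∀ y ∈ D i, T y ∈ D i) ∧ ∀ y ∈ D i, ‖T y‖ = Real.cos (θ i) * ‖y‖ := by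
    rcases eq_or_ne i 0 with rfl | hi
    · have hTJ : ∀ y ∈ D 0, T y = J y := fun y hy =>
        tangential_eq_of_map_mem hT hN hTN (hDW 0 hy) (hDW 0 (hinv y hy))
      refine ⟨fun y hy => hTJ y hy ▸ hinv y hy, fun y hy => ?_⟩
      rw [hTJ y hy, hθ0, Real.cos_zero, one_mul]
      exact (J.isometryOfInner hJinner).norm_map y
    · exact ⟨hTD i hi, hslant i hi⟩
  have hTT : T (T x) = -(Real.cos (θ i) ^ 2 • x) :=
    T.apply_apply_eq_neg_sq_smul_of_skew hslant_all.1
      (fun a ha b hb => inner_tangential_left_eq_neg hJinner hJsq hN hTN (hDW i ha) (hDW i hb))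
      hslant_all.2 hx
  rw [hyp v hv x (hDW i hx), map_neg, hyp v hv _ (hT x (hDW i hx)), neg_neg, hTT, map_neg,
    map_smul]

/-- Theorem 3.6 (iii), fiberwise: if `T(A_v x) = -A_v(Tx)` for all `x ∈ W`, `v ∈ W⊥`
(which holds when ∇N = 0 for a submanifold of a Kähler manifold), then
`T²(A_v x) = -cos²θᵢ · A_v x` for every `i`, `x ∈ Dᵢ`, `v ∈ W⊥`; in particular any
nonzero `A_v x` with `x ∈ Dᵢ` is an eigenvector of `T²` with eigenvalue `-cos²θᵢ`. -/
theorem T_sq_eigen_of_T_anticommutes_shape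
    {V : Type*} [NormedAddCommGroup V] [InnerProductSpace ℝ V] [FiniteDimensional ℝ V]
    (J : V →ₗ[ℝ] V)
    (hJinner : ∀ x y : V, ⟪J x, J y⟫ = ⟪x, y⟫)
    (hJsq : ∀ x : V, J (J x) = -x)
    (W : Submodule ℝ V)
    (T N : V →ₗ[ℝ] V)
    (hT : ∀ x ∈ W, T x ∈ W)
    (hN : ∀ x ∈ W, N x ∈ Wᗮ)
    (hTN : ∀ x ∈ W, J x = T x + N x)
    (k : ℕ)
    (D : Fin (k+1) → Submodule ℝ V)
    (hDW : ∀ i, D i ≤ W)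
    (hDorth : ∀ i j, i ≠ j → ∀ x ∈ D i, ∀ y ∈ D j, ⟪x, y⟫ = 0)
    (hinv : ∀ x ∈ D 0, J x ∈ D 0)
    (hTD : ∀ i : Fin (k+1), i ≠ 0 → ∀ x ∈ D i, T x ∈ D i)
    (θ : Fin (k+1) → ℝ)
    (hθ0 : θ 0 = 0)
    (hθ : ∀ i : Fin (k+1), i ≠ 0 → θ i ∈ Set.Ioc 0 (Real.pi / 2))
    (hslant : ∀ i : Fin (k+1), i ≠ 0 → ∀ x ∈ D i, ‖T x‖ = Real.cos (θ i) * ‖x‖)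
    (P : Fin (k+1) → V →ₗ[ℝ] V)
    (hPmem : ∀ i x, P i x ∈ D i)
    (hPorth : ∀ i x, ∀ y ∈ D i, ⟪x - P i x, y⟫ = 0)
    (hPsum : ∀ x ∈ W, x = ∑ i, P i x)
    (t n : V →ₗ[ℝ] V)
    (ht : ∀ v ∈ Wᗮ, t v ∈ W)
    (hn : ∀ v ∈ Wᗮ, n v ∈ Wᗮ)
    (htn : ∀ v ∈ Wᗮ, J v = t v + n v)
    (h : V →ₗ[ℝ] V →ₗ[ℝ] V)
    (hhmem : ∀ x ∈ W, ∀ y ∈ W, h x y ∈ Wᗮ)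
    (hhsymm : ∀ x ∈ W, ∀ y ∈ W, h x y = h y x)
    (A : V → V →ₗ[ℝ] V)
    (hAmem : ∀ v ∈ Wᗮ, ∀ x ∈ W, A v x ∈ W)
    (hA : ∀ v ∈ Wᗮ, ∀ x ∈ W, ∀ y ∈ W, ⟪A v x, y⟫ = ⟪h x y, v⟫)
    (hyp : ∀ v ∈ Wᗮ, ∀ x ∈ W, T (A v x) = -(A v (T x))) :
    ∀ i : Fin (k+1), ∀ x ∈ D i, ∀ v ∈ Wᗮ,
      T (T (A v x)) = -((Real.cos (θ i)) ^ 2 • A v x) :=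
  T_sq_eigen_of_T_anticommutes_shape_general J hJinner hJsq W T N hT hN hTN k D hDW hinv hTD θ hθ0
    hslant A hyp
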